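/- Let F be a field of characteristic 0, A an additive abelian group, T an F-vector space, and φ : T × A → F a map that is F-linear in the first variable and additive in the second. Then the generalized Witt algebra W(A,T,φ) is a simple Lie algebra if and only if A ≠ 0 and φ is nondegenerate. -/

import Mathlib

/-! Generalized Witt algebras `W(A,T,φ)` over a field `F` of characteristic `0`,
following Djokovic-Zhao. Here `A` is an (additive) abelian group, `T` an
`F`-vector space, and `φ : T × A → F` is `F`-linear in the first variable and
additive in the second (encoded as `φ : T →ₗ[F] (A →+ F)`). -/

namespace GW

variable {F : Type*} [Field F]
variable {A : Type*} [AddCommGroup A]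
variable {T : Type*} [AddCommGroup T] [Module F T]
variable (φ : T →ₗ[F] (A →+ F))

/-- The bracket on finitely supported functions `A →₀ T`: the bilinear extension of
`[t^α a, t^β b] = t^(α+β) (φ a β • b - φ b α • a)`. -/
noncomputable def brk (x y : A →₀ T) : A →₀ T :=
  x.sum fun α a => y.sum fun β b => Finsupp.single (α + β) (φ a β • b - φ b α • a)

lemma brk_zero_left (y : A →₀ T) : brk φ 0 y = 0 := by
  simp [brk]

lemma brk_zero_right (x : A →₀ T) : brk φ x 0 = 0 := by
  simp [brk]

lemma brk_single_single (α β : A) (a b : T) :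
    brk φ (Finsupp.single α a) (Finsupp.single β b)
      = Finsupp.single (α + β) (φ a β • b - φ b α • a) := by
  unfold brk
  rw [Finsupp.sum_single_index, Finsupp.sum_single_index]
  · simp
  · simp

lemma brk_add_left (x x' y : A →₀ T) : brk φ (x + x') y = brk φ x y + brk φ x' y := by
  unfold brk
  rw [Finsupp.sum_add_index']
  · intro α; simp
  · intro α a a'
    rw [← Finsupp.sum_add]
    congr 1
    funext β b
    rw [← Finsupp.single_add]
    congr 1
    simp only [map_add, LinearMap.add_apply, AddMonoidHom.add_apply, add_smul, smul_add]
    abel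

lemma brk_add_right (x y y' : A →₀ T) : brk φ x (y + y') = brk φ x y + brk φ x y' := by
  unfold brk
  rw [← Finsupp.sum_add]
  congr 1
  funext α a
  rw [Finsupp.sum_add_index']
  · intro β; simp
  · intro β b b'
    rw [← Finsupp.single_add]
    congr 1
    simp only [map_add, LinearMap.add_apply, AddMonoidHom.add_apply, add_smul, smul_add]
    abel

lemma brk_neg_swap (x y : A →₀ T) : brk φ y x = - brk φ x y := by
  unfold brk
  rw [Finsupp.sum_comm]
  rw [← Finsupp.sum_neg]
  congr 1
  funext α a
  rw [← Finsupp.sum_neg]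
  congr 1
  funext β b
  rw [← Finsupp.single_neg, add_comm β α]
  congr 1
  abel

lemma brk_smul_right (c : F) (x y : A →₀ T) : brk φ x (c • y) = c • brk φ x y := by
  unfold brk
  rw [Finsupp.smul_sum]
  congr 1
  funext α a
  rw [Finsupp.sum_smul_index', Finsupp.smul_sum]
  · congr 1
    funext β b
    rw [Finsupp.smul_single]
    congr 1
    simp only [map_smul, LinearMap.smul_apply, AddMonoidHom.smul_apply, smul_sub, smul_smul,
      smul_eq_mul]
    rw [mul_comm]
  · intro β; simp

lemma brk_self [CharZero F] (x : A →₀ T) : brk φ x x = 0 := by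
  have h : brk φ x x = -brk φ x x := brk_neg_swap φ x x
  have h2 : (2 : F) • brk φ x x = 0 := by
    rw [two_smul]
    nth_rewrite 2 [h]
    simp
  calc brk φ x x = (2 : F)⁻¹ • ((2 : F) • brk φ x x) :=
        (inv_smul_smul₀ two_ne_zero _).symm
    _ = 0 := by rw [h2, smul_zero]

lemma brk_leibniz (x y z : A →₀ T) :
    brk φ x (brk φ y z) = brk φ (brk φ x y) z + brk φ y (brk φ x z) := by
  induction x using Finsupp.induction_linear with
  | zero => simp [brk_zero_left, brk_zero_right]
  | add f g hf hg =>
      simp only [brk_add_left, brk_add_right, hf, hg]; abel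
  | single α a =>
    induction y using Finsupp.induction_linear with
    | zero => simp [brk_zero_left, brk_zero_right]
    | add f g hf hg =>
        simp only [brk_add_left, brk_add_right, hf, hg]; abel
    | single β b =>
      induction z using Finsupp.induction_linear with
      | zero => simp [brk_zero_left, brk_zero_right]
      | add f g hf hg =>
          simp only [brk_add_left, brk_add_right, hf, hg]; abel
      | single γ c =>
        rw [brk_single_single, brk_single_single, brk_single_single, brk_single_single,
          brk_single_single, brk_single_single]
        rw [show β + (α + γ) = α + β + γ by abel, show α + (β + γ) = α + β + γ by abel,
          ← Finsupp.single_add]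
        congr 1
        simp only [map_add, map_sub, map_smul, LinearMap.sub_apply, LinearMap.smul_apply,
          AddMonoidHom.add_apply, AddMonoidHom.sub_apply, AddMonoidHom.smul_apply,
          smul_eq_mul, smul_sub, sub_smul, add_smul, smul_smul]
        ring_nf
        module

variable (F A T) in
/-- The carrier of the generalized Witt algebra `W(A,T,φ)`: finitely supported
functions from `A` to `T`, where `t^α ∂` corresponds to the function supported
at `α` with value `∂`. -/
@[nolint unusedArguments]
def W (_φ : T →ₗ[F] (A →+ F)) : Type _ := A →₀ T

noncomputable instance : AddCommGroup (W F A T φ) := inferInstanceAs (AddCommGroup (A →₀ T))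

noncomputable instance : Module F (W F A T φ) := inferInstanceAs (Module F (A →₀ T))

/-- The element `t^α ∂` of the generalized Witt algebra. -/
noncomputable def tt (α : A) (d : T) : W F A T φ := Finsupp.single α d

/-- The underlying finitely supported function of an element of `W(A,T,φ)`. -/
def toF (x : W F A T φ) : A →₀ T := x

/-- The Lie ring structure on the generalized Witt algebra `W(A,T,φ)`, with bracket
determined by `[t^α ∂, t^β ∂'] = t^(α+β) (φ(∂,β) • ∂' - φ(∂',α) • ∂)`. -/
noncomputable instance [CharZero F] : LieRing (W F A T φ) :=
  { (inferInstance : AddCommGroup (A →₀ T)) with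
    bracket := fun x y => brk φ (toF φ x) (toF φ y)
    add_lie := fun x y z => brk_add_left φ x y z
    lie_add := fun x y z => brk_add_right φ x y z
    lie_self := fun x => brk_self φ x
    leibniz_lie := fun x y z => brk_leibniz φ x y z }

/-- The generalized Witt algebra `W(A,T,φ)` as a Lie algebra over `F`. -/
noncomputable instance [CharZero F] : LieAlgebra F (W F A T φ) :=
  { (inferInstance : Module F (A →₀ T)) with
    lie_smul := fun c x y => brk_smul_right φ c x y }

@[simp] theorem bracket_tt [CharZero F] (α β : A) (a b : T) :
    ⁅tt φ α a, tt φ β b⁆ = tt φ (α + β) (φ a β • b - φ b α • a) :=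
  brk_single_single φ α β a b

/-- Nondegeneracy of the map `φ`. -/
def Nondeg : Prop :=
  (∀ α : A, (∀ d : T, φ d α = 0) → α = 0) ∧ (∀ d : T, (∀ α : A, φ d α = 0) → d = 0)

/-- `(A', T')` is a nondegenerate pair for `φ`. -/
def NondegPair (A' : AddSubgroup A) (T' : Submodule F T) : Prop :=
  (∀ d ∈ T', (∀ α ∈ A', φ d α = 0) → d = 0) ∧
  (∀ α ∈ A', (∀ d ∈ T', φ d α = 0) → α = 0)

/-- The subset (in fact Lie subalgebra) of `W(A,T,φ)` consisting of the finitely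
supported functions supported in `A'` with values in `T'`. -/
def supportedIn (A' : AddSubgroup A) (T' : Submodule F T) : Set (W F A T φ) :=
  {x | (∀ α : A, toF φ x α ∈ T') ∧ ∀ α : A, α ∉ A' → toF φ x α = 0}

end GW

/-! A nonzero ideal of `W(A,T,φ)` contains some `t^β b` with `b ≠ 0`: the elements `t^0 e` act
diagonally, by `φ(e, γ)` on the `γ`-component, so for a suitable `e` the element
`[t^0 e, x] - φ(e, β) x` is nonzero with smaller support than `x`. Since
`[t^(α-β) b, t^β b] = (2 φ(b,β) - φ(b,α)) t^α b` and `φ(b, ·)` takes infinitely many values, the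
ideal contains `t^α b` for every `α`, and brackets of these with `t^γ d` give every `t^α d`.
Conversely, maps `g : A → A'` and `f : T → T'` compatible with `φ` and `φ'` induce a Lie algebra
map `W(A,T,φ) → W(A',T',φ')`, which is injective when `W(A,T,φ)` is simple. For `α ↦ φ(·, α)`
and for `f = φ` injectivity says exactly that `φ` is nondegenerate. -/

theorem AddMonoidHom.exists_apply_ne_ne {A F : Type*} [AddCommGroup A] [Field F] [CharZero F]
    {f : A →+ F} (hf : f ≠ 0) (u v : F) : ∃ γ, f γ ≠ u ∧ f γ ≠ v := by
  classical
  obtain ⟨γ, hγ⟩ : ∃ γ, f γ ≠ 0 := DFunLike.ne_iff.mp hf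
  have hinj : Function.Injective fun n : ℕ => f (n • γ) := fun m n hmn => by
    simpa [hγ] using hmn
  obtain ⟨_, ⟨n, rfl⟩, hn⟩ :=
    (Set.infinite_range_of_injective hinj).exists_notMem_finset {u, v}
  rw [Finset.mem_insert, Finset.mem_singleton, not_or] at hn
  exact ⟨n • γ, hn⟩

theorem LieHom.injective_of_ne_zero {R L L' : Type*} [CommRing R] [LieRing L] [LieAlgebra R L]
    [LieRing L'] [LieAlgebra R L'] [LieAlgebra.IsSimple R L] {f : L →ₗ⁅R⁆ L'} (hf : f ≠ 0) :
    Function.Injective f := by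
  refine f.ker_eq_bot.mp ((LieAlgebra.IsSimple.eq_bot_or_eq_top f.ker).resolve_right fun h => ?_)
  exact hf (LieHom.ext fun x => f.mem_ker.mp (h ▸ LieSubmodule.mem_top x))

namespace GW

variable {F : Type*} [Field F]
variable {A : Type*} [AddCommGroup A]
variable {T : Type*} [AddCommGroup T] [Module F T]
variable (φ : T →ₗ[F] (A →+ F))

@[elab_as_elim]
theorem W.induction_on {motive : W F A T φ → Prop} (x : W F A T φ) (zero : motive 0)
    (add : ∀ x y, motive x → motive y → motive (x + y)) (single : ∀ α d, motive (tt φ α d)) :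
    motive x :=
  Finsupp.induction_linear (motive := motive) x zero add single

theorem tt_smul (α : A) (c : F) (d : T) : tt φ α (c • d) = c • tt φ α d :=
  (Finsupp.smul_single c α d).symm

theorem tt_add (α : A) (d e : T) : tt φ α (d + e) = tt φ α d + tt φ α e :=
  Finsupp.single_add α d e

theorem tt_eq_zero_iff {α : A} {d : T} : tt φ α d = 0 ↔ d = 0 := Finsupp.single_eq_zero

section Functoriality

variable {φ} {A' : Type*} [AddCommGroup A'] {T' : Type*} [AddCommGroup T'] [Module F T']
  {φ' : T' →ₗ[F] (A' →+ F)}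

noncomputable def mapₗ (g : A →+ A') (f : T →ₗ[F] T') : W F A T φ →ₗ[F] W F A' T' φ' :=
  Finsupp.lmapDomain T' F g ∘ₗ Finsupp.mapRange.linearMap f

theorem mapₗ_tt (g : A →+ A') (f : T →ₗ[F] T') (α : A) (d : T) :
    mapₗ g f (tt φ α d) = tt φ' (g α) (f d) := by
  change Finsupp.mapDomain g (Finsupp.mapRange f f.map_zero (Finsupp.single α d)) = _
  rw [Finsupp.mapRange_single, Finsupp.mapDomain_single]
  rfl

end Functoriality

variable (F T) in
def dualEval : T →ₗ[F] (Module.Dual F T →+ F) where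
  toFun := LinearMap.evalAddMonoidHom
  map_add' d e := by ext; simp
  map_smul' c d := by ext; simp

def toDual : A →+ Module.Dual F T :=
  AddMonoidHom.mk' (fun α => ⟨⟨fun d => φ d α, fun d e => by simp⟩, fun c d => by simp⟩)
    fun α β => by ext; simp

theorem dualEval_toDual (d : T) (α : A) : dualEval F T d (toDual φ α) = φ d α := rfl

variable [CharZero F]

/-! The additive group underlying the Lie ring `W F A T φ` is not reducibly defeq to the
`AddCommGroup` instance on `W F A T φ`, so generic lemmas such as `lie_add`, `zero_lie` or
`Submodule.smul_mem_iff` do not apply to `W`. -/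

theorem W.lie_add (x y z : W F A T φ) : ⁅x, y + z⁆ = ⁅x, y⁆ + ⁅x, z⁆ := brk_add_right φ x y z

theorem W.add_lie (x y z : W F A T φ) : ⁅x + y, z⁆ = ⁅x, z⁆ + ⁅y, z⁆ := brk_add_left φ x y z

theorem W.lie_zero (x : W F A T φ) : ⁅x, (0 : W F A T φ)⁆ = 0 := brk_zero_right φ x

theorem W.zero_lie (x : W F A T φ) : ⁅(0 : W F A T φ), x⁆ = 0 := brk_zero_left φ x

theorem lie_tt_zero_left (e d : T) (α : A) : ⁅tt φ 0 e, tt φ α d⁆ = φ e α • tt φ α d := by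
  rw [bracket_tt, zero_add, map_zero, zero_smul, sub_zero, tt_smul]

theorem toF_lie_tt_zero_apply (e : T) (x : W F A T φ) (γ : A) :
    toF φ ⁅tt φ 0 e, x⁆ γ = φ e γ • toF φ x γ := by
  induction x using W.induction_on with
  | zero => rw [W.lie_zero]; exact (smul_zero _).symm
  | add x y hx hy =>
    rw [W.lie_add]
    exact (congrArg₂ (· + ·) hx hy).trans (smul_add _ _ _).symm
  | single α d =>
    rw [lie_tt_zero_left]
    change (φ e α • Finsupp.single α d) γ = φ e γ • Finsupp.single α d γ
    rcases eq_or_ne α γ with rfl | hαγ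
    · rfl
    · simp only [Finsupp.smul_apply, Finsupp.single_eq_of_ne' hαγ, smul_zero]

theorem isLieAbelian_of_phi_eq_zero (h : φ = 0) : IsLieAbelian (W F A T φ) := by
  have hφ : ∀ d α, φ d α = 0 := fun d α => by simp [h]
  refine ⟨fun x y => ?_⟩
  induction x using W.induction_on with
  | zero => exact W.zero_lie φ y
  | add x x' hx hx' => rw [W.add_lie, hx, hx', add_zero]
  | single α a =>
    induction y using W.induction_on with
    | zero => exact W.lie_zero φ _
    | add y y' hy hy' => rw [W.lie_add, hy, hy', add_zero]
    | single β b =>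
      rw [bracket_tt, hφ, hφ, zero_smul, zero_smul, sub_zero, tt_eq_zero_iff]

open scoped Classical in
theorem support_lie_tt_zero_sub_smul (e : T) (β : A) (x : W F A T φ) :
    (toF φ (⁅tt φ 0 e, x⁆ - φ e β • x)).support =
      (toF φ x).support.filter fun γ => φ e γ ≠ φ e β := by
  ext γ
  have hγ : toF φ (⁅tt φ 0 e, x⁆ - φ e β • x) γ = (φ e γ - φ e β) • toF φ x γ := by
    rw [sub_smul, ← toF_lie_tt_zero_apply]
    rfl
  rw [Finsupp.mem_support_iff, hγ, Finset.mem_filter, Finsupp.mem_support_iff, smul_ne_zero_iff,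
    sub_ne_zero, and_comm]

variable {φ} {I : LieIdeal F (W F A T φ)}

theorem mem_of_smul_mem {c : F} (hc : c ≠ 0) {x : W F A T φ} (h : c • x ∈ I) : x ∈ I :=
  inv_smul_smul₀ hc x ▸ I.smul_mem c⁻¹ h

theorem exists_tt_mem (hA : ∀ α, (∀ d, φ d α = 0) → α = 0) {x : W F A T φ} (hx : x ∈ I)
    (hx0 : x ≠ 0) : ∃ β b, b ≠ 0 ∧ tt φ β b ∈ I := by
  classical
  induction hn : (toF φ x).support.card using Nat.strong_induction_on generalizing x with
  | _ n ih =>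
  obtain ⟨β, hβ⟩ | ⟨β₁, hβ₁, β₂, hβ₂, hne⟩ :=
    (Finsupp.support_nonempty_iff.mpr hx0).exists_eq_singleton_or_nontrivial
  · obtain ⟨hb, hxβ⟩ := Finsupp.support_eq_singleton.mp hβ
    exact ⟨β, _, hb, by convert hx using 1; exact hxβ.symm⟩
  obtain ⟨e, he⟩ : ∃ e, φ e (β₁ - β₂) ≠ 0 := not_forall.mp (mt (hA _) (sub_ne_zero.mpr hne))
  have hy : ⁅tt φ 0 e, x⁆ - φ e β₁ • x ∈ I := sub_mem (I.lie_mem hx) (I.smul_mem _ hx)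
  have hsupp := support_lie_tt_zero_sub_smul φ e β₁ x
  have hβ₂' : β₂ ∈ (toF φ (⁅tt φ 0 e, x⁆ - φ e β₁ • x)).support := by
    rw [hsupp, Finset.mem_filter]
    exact ⟨hβ₂, fun h => he (by rw [map_sub, h, sub_self])⟩
  refine ih _ ?_ hy (fun h => ?_) rfl
  · rw [← hn, hsupp]
    exact Finset.card_lt_card (Finset.filter_ssubset.mpr ⟨β₁, hβ₁, fun h => h rfl⟩)
  · rw [h] at hβ₂'
    exact Finsupp.notMem_support_iff.mpr rfl hβ₂'

theorem tt_mem_of_two_mul_ne {β α : A} {b : T} (hβ : tt φ β b ∈ I) (h : φ b α ≠ 2 * φ b β) :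
    tt φ α b ∈ I := by
  have key : ⁅tt φ (α - β) b, tt φ β b⁆ = (2 * φ b β - φ b α) • tt φ α b := by
    rw [bracket_tt, sub_add_cancel, ← sub_smul, tt_smul, map_sub]
    congr 1
    ring
  have hmem := I.lie_mem (x := tt φ (α - β) b) hβ
  rw [key] at hmem
  exact mem_of_smul_mem (sub_ne_zero.mpr h.symm) hmem

theorem tt_mem_of_tt_mem {b : T} (hb : φ b ≠ 0) {β : A} (hβ : tt φ β b ∈ I) (α : A) :
    tt φ α b ∈ I := by
  obtain ⟨γ, hγβ, hγα⟩ := (φ b).exists_apply_ne_ne hb (2 * φ b β) (φ b α / 2)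
  refine tt_mem_of_two_mul_ne (tt_mem_of_two_mul_ne hβ hγβ) fun h => hγα ?_
  rw [h]
  ring

theorem tt_mem_of_forall_tt_mem {b : T} (hb : φ b ≠ 0) (h : ∀ γ, tt φ γ b ∈ I) (α : A) (d : T) :
    tt φ α d ∈ I := by
  obtain ⟨γ, hγ⟩ : ∃ γ, φ b γ ≠ 0 := DFunLike.ne_iff.mp hb
  have key : φ b γ • tt φ α d = ⁅tt φ (α - γ) b, tt φ γ d⁆ + φ d (α - γ) • tt φ α b := by
    rw [bracket_tt, sub_add_cancel, ← tt_smul, ← tt_smul, ← tt_add, sub_add_cancel]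
  have hmem : φ b γ • tt φ α d ∈ I :=
    key ▸ add_mem (lie_mem_left F _ I _ _ (h _)) (I.smul_mem _ (h α))
  exact mem_of_smul_mem hγ hmem

theorem eq_top_of_forall_tt_mem (h : ∀ α d, tt φ α d ∈ I) : I = ⊤ :=
  eq_top_iff.mpr fun x _ => W.induction_on φ x (zero_mem I) (fun _ _ => add_mem) h

theorem eq_bot_or_eq_top_of_nondeg (hnd : Nondeg φ) (I : LieIdeal F (W F A T φ)) :
    I = ⊥ ∨ I = ⊤ := by
  refine or_iff_not_imp_left.mpr fun hI => ?_
  obtain ⟨x, hx, hx0⟩ : ∃ x ∈ I, x ≠ 0 := by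
    by_contra! h
    exact hI ((LieSubmodule.eq_bot_iff I).mpr h)
  obtain ⟨β, b, hb0, hβ⟩ := exists_tt_mem hnd.1 hx hx0
  have hb : φ b ≠ 0 := fun h => hb0 (hnd.2 b (DFunLike.congr_fun h))
  exact eq_top_of_forall_tt_mem (tt_mem_of_forall_tt_mem hb (tt_mem_of_tt_mem hb hβ))

theorem not_isLieAbelian_of_nondeg [Nontrivial A] (hnd : Nondeg φ) :
    ¬IsLieAbelian (W F A T φ) := by
  obtain ⟨α, hα⟩ := exists_ne (0 : A)
  obtain ⟨d, hd⟩ : ∃ d, φ d α ≠ 0 := not_forall.mp (mt (hnd.1 α) hα)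
  intro hab
  have hzero := trivial_lie_zero (W F A T φ) (W F A T φ) (tt φ 0 d) (tt φ α d)
  rw [lie_tt_zero_left, smul_eq_zero, tt_eq_zero_iff] at hzero
  obtain rfl := hzero.resolve_left hd
  exact hd (by simp)

theorem isSimple_of_nondeg [Nontrivial A] (hnd : Nondeg φ) : LieAlgebra.IsSimple F (W F A T φ) :=
  ⟨eq_bot_or_eq_top_of_nondeg hnd, not_isLieAbelian_of_nondeg hnd⟩

section Functoriality

variable {A' : Type*} [AddCommGroup A'] {T' : Type*} [AddCommGroup T'] [Module F T']
  {φ' : T' →ₗ[F] (A' →+ F)}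

variable (φ') in
noncomputable def map (g : A →+ A') (f : T →ₗ[F] T') (hfg : ∀ d α, φ' (f d) (g α) = φ d α) :
    W F A T φ →ₗ⁅F⁆ W F A' T' φ' :=
  { mapₗ g f with
    map_lie' := fun {x y} => by
      dsimp only [AddHom.toFun_eq_coe, LinearMap.coe_toAddHom]
      induction x using W.induction_on with
      | zero => rw [W.zero_lie, map_zero, W.zero_lie]
      | add x x' hx hx' => rw [W.add_lie, map_add, map_add, W.add_lie, hx, hx']
      | single α a =>
        induction y using W.induction_on with
        | zero => rw [W.lie_zero, map_zero, W.lie_zero]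
        | add y y' hy hy' => rw [W.lie_add, map_add, map_add, W.lie_add, hy, hy']
        | single β b =>
          rw [bracket_tt, mapₗ_tt, mapₗ_tt, mapₗ_tt, bracket_tt, map_add, map_sub, map_smul,
            map_smul, hfg, hfg] }

theorem map_tt (g : A →+ A') (f : T →ₗ[F] T') (hfg : ∀ d α, φ' (f d) (g α) = φ d α) (α : A)
    (d : T) : map φ' g f hfg (tt φ α d) = tt φ' (g α) (f d) :=
  mapₗ_tt g f α d

theorem map_injective [LieAlgebra.IsSimple F (W F A T φ)] {g : A →+ A'} {f : T →ₗ[F] T'}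
    (hfg : ∀ d α, φ' (f d) (g α) = φ d α) (hf : f ≠ 0) : Function.Injective (map φ' g f hfg) := by
  refine LieHom.injective_of_ne_zero fun h => ?_
  obtain ⟨d, hd⟩ := DFunLike.ne_iff.mp hf
  have := DFunLike.congr_fun h (tt φ 0 d)
  rw [map_tt, LieHom.zero_apply] at this
  exact hd ((tt_eq_zero_iff φ').mp this)

end Functoriality

variable (φ) in
theorem phi_ne_zero [LieAlgebra.IsSimple F (W F A T φ)] : φ ≠ 0 :=
  fun h => LieAlgebra.IsSimple.non_abelian F (isLieAbelian_of_phi_eq_zero φ h)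

theorem nondeg_of_isSimple [LieAlgebra.IsSimple F (W F A T φ)] : Nondeg φ := by
  obtain ⟨e, he⟩ : ∃ e, φ e ≠ 0 := DFunLike.ne_iff.mp (phi_ne_zero φ)
  have he0 : e ≠ 0 := fun h => he (h ▸ map_zero φ)
  refine ⟨fun α hα => ?_, fun d hd => ?_⟩
  · have hinj := map_injective (φ := φ) (φ' := dualEval F T) (g := toDual φ) (f := LinearMap.id)
      (dualEval_toDual φ) fun h => he0 (LinearMap.congr_fun h e)
    have hα' : toDual φ α = toDual φ 0 := by
      ext d
      exact (hα d).trans (map_zero (φ d)).symm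
    have := @hinj (tt φ α e) (tt φ 0 e) (by rw [map_tt, map_tt, hα'])
    exact (Finsupp.single_left_inj he0).mp this
  · have hinj := map_injective (φ := φ) (φ' := LinearMap.id) (g := AddMonoidHom.id A) (f := φ)
      (fun _ _ => rfl) (phi_ne_zero φ)
    have hd' : φ d = 0 := DFunLike.ext _ _ hd
    have := @hinj (tt φ 0 d) (tt φ 0 0) (by rw [map_tt, map_tt, hd', map_zero φ])
    exact Finsupp.single_injective 0 this

end GW

theorem GW.isSimple_iff
    {F : Type*} [Field F] [CharZero F]
    {A : Type*} [AddCommGroup A]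
    {T : Type*} [AddCommGroup T] [Module F T]
    (φ : T →ₗ[F] (A →+ F)) :
    LieAlgebra.IsSimple F (GW.W F A T φ) ↔ Nontrivial A ∧ GW.Nondeg φ := by
  constructor
  · intro hs
    obtain ⟨e, he⟩ : ∃ e, φ e ≠ 0 := DFunLike.ne_iff.mp (GW.phi_ne_zero φ)
    obtain ⟨α, hα⟩ : ∃ α, φ e α ≠ 0 := DFunLike.ne_iff.mp he
    exact ⟨nontrivial_of_ne α 0 fun h => hα (h ▸ map_zero (φ e)), GW.nondeg_of_isSimple⟩
  · rintro ⟨_, hnd⟩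
    exact GW.isSimple_of_nondeg hnd
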